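/- arXiv:1512.08181 — 2 statements merged into one kernel-verified Lean document; each statement's English description precedes it below -/
import Mathlib

section
/- Let ω : ℝ → ℝ be differentiable with ω' > 0, and U : ℝ → ℝ be C² convex. Suppose reals ũⱼ (j = 1,…,N) and u⁺ and weights αⱼ ≥ 0 with Σαⱼ = 1 satisfy ω(u⁺) = Σⱼ αⱼ ω(ũⱼ). Define Ω(u) = ∫₀ᵘ U'(s)ω'(s) ds. Then Ω(u⁺) ≤ Σⱼ αⱼ Ω(ũⱼ). -/
/-!
Write `Ω(x) = ∫₀ˣ U' ω'`. Since `U'` is monotone and `ω' > 0`, comparing `U'(s)` with `U'(u⁺)`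
on the interval between `u⁺` and `ũⱼ` gives the subgradient inequality
`U'(u⁺) (ω(ũⱼ) - ω(u⁺)) ≤ Ω(ũⱼ) - Ω(u⁺)`, whichever way the interval is oriented. Averaging
with the weights `αⱼ` kills the left-hand side, because `ω(u⁺) = Σ αⱼ ω(ũⱼ)`.
-/

open intervalIntegral MeasureTheory

/-- `hsub` says that `c` is a subgradient of `Φ ∘ f⁻¹` at `f a`, so this is Jensen's inequality
for `Φ ∘ f⁻¹` without `f` having to be invertible. -/
theorem le_sum_mul_of_subgradient {ι : Type*} (s : Finset ι) {Φ f : ℝ → ℝ} {a c : ℝ}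
    (hsub : ∀ b, c * (f b - f a) ≤ Φ b - Φ a) {α u : ι → ℝ} (hα : ∀ i ∈ s, 0 ≤ α i)
    (hsum : ∑ i ∈ s, α i = 1) (hcomb : f a = ∑ i ∈ s, α i * f (u i)) :
    Φ a ≤ ∑ i ∈ s, α i * Φ (u i) := by
  have hdev : ∀ φ : ℝ → ℝ, ∑ i ∈ s, α i * (φ (u i) - φ a) = ∑ i ∈ s, α i * φ (u i) - φ a :=
    fun φ => by simp only [mul_sub, Finset.sum_sub_distrib, ← Finset.sum_mul, hsum, one_mul]
  have hzero : ∑ i ∈ s, α i * (c * (f (u i) - f a)) = 0 :=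
    calc ∑ i ∈ s, α i * (c * (f (u i) - f a)) = c * ∑ i ∈ s, α i * (f (u i) - f a) := by
          rw [Finset.mul_sum]
          exact Finset.sum_congr rfl fun i _ => mul_left_comm _ _ _
      _ = 0 := by rw [hdev f, ← hcomb, sub_self, mul_zero]
  have hle : ∑ i ∈ s, α i * (c * (f (u i) - f a)) ≤ ∑ i ∈ s, α i * (Φ (u i) - Φ a) :=
    Finset.sum_le_sum fun i hi => mul_le_mul_of_nonneg_left (hsub (u i)) (hα i hi)
  linarith [hdev Φ]

section

variable {f f' g : ℝ → ℝ} (hf : ∀ x, HasDerivAt f (f' x) x) (hf' : ∀ x, 0 ≤ f' x)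
include hf hf'

theorem intervalIntegrable_deriv_of_forall_nonneg (a b : ℝ) : IntervalIntegrable f' volume a b :=
  intervalIntegrable_deriv_of_nonneg
    (continuous_iff_continuousAt.2 fun x => (hf x).continuousAt).continuousOn
    (fun x _ => hf x) fun x _ => hf' x

theorem intervalIntegrable_mul_deriv_of_nonneg (hg : Continuous g) (a b : ℝ) :
    IntervalIntegrable (fun s => g s * f' s) volume a b :=
  (intervalIntegrable_deriv_of_forall_nonneg hf hf' a b).continuousOn_mul hg.continuousOn

theorem mul_sub_le_integral_mul_deriv (hg : Monotone g) (hgc : Continuous g) (a b : ℝ) :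
    g a * (f b - f a) ≤ ∫ s in a..b, g s * f' s := by
  have hf'_int := intervalIntegrable_deriv_of_forall_nonneg hf hf'
  have hgf'_int := intervalIntegrable_mul_deriv_of_nonneg hf hf' hgc
  rw [← integral_eq_sub_of_hasDerivAt (fun x _ => hf x) (hf'_int a b),
    ← intervalIntegral.integral_const_mul]
  rcases le_total a b with hab | hba
  · exact integral_mono_on hab ((hf'_int a b).const_mul _) (hgf'_int a b) fun s hs =>
      mul_le_mul_of_nonneg_right (hg hs.1) (hf' s)
  · rw [integral_symm b a, integral_symm b a (f := fun s => g s * f' s), neg_le_neg_iff]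
    exact integral_mono_on hba (hgf'_int b a) ((hf'_int b a).const_mul _) fun s hs =>
      mul_le_mul_of_nonneg_right (hg hs.2) (hf' s)

end

/-- Convex decomposition inequality for entropy fluxes: if ω(u⁺) is a convex
combination of the ω(ũⱼ), then the same inequality holds for Ω with Ω' = U'ω'. -/
theorem stmt10 (ω ω' U : ℝ → ℝ)
    (hω : ∀ x, HasDerivAt ω (ω' x) x) (hω' : ∀ x, 0 < ω' x)
    (hU : ContDiff ℝ 2 U) (hUconv : ConvexOn ℝ Set.univ U)
    (N : ℕ) (α : Fin N → ℝ) (hα : ∀ j, 0 ≤ α j) (hsum : ∑ j, α j = 1)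
    (ut : Fin N → ℝ) (uplus : ℝ)
    (hcomb : ω uplus = ∑ j, α j * ω (ut j)) :
    (∫ s in (0 : ℝ)..uplus, deriv U s * ω' s)
      ≤ ∑ j, α j * ∫ s in (0 : ℝ)..(ut j), deriv U s * ω' s := by
  have hω'_nonneg : ∀ x, 0 ≤ ω' x := fun x => (hω' x).le
  have hU'_cont : Continuous (deriv U) := hU.continuous_deriv one_le_two
  have hU'_mono : Monotone (deriv U) := monotoneOn_univ.mp <|
    hUconv.monotoneOn_deriv fun x _ => (hU.differentiable two_ne_zero).differentiableAt
  refine le_sum_mul_of_subgradient Finset.univ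
    (Φ := fun x => ∫ s in (0 : ℝ)..x, deriv U s * ω' s) (c := deriv U uplus) (fun b => ?_)
    (fun j _ => hα j) hsum hcomb
  rw [integral_interval_sub_left
    (intervalIntegrable_mul_deriv_of_nonneg hω hω'_nonneg hU'_cont 0 b)
    (intervalIntegrable_mul_deriv_of_nonneg hω hω'_nonneg hU'_cont 0 uplus)]
  exact mul_sub_le_integral_mul_deriv hω hω'_nonneg hU'_mono hU'_cont uplus b
end

section
/- Line scheme entropy monotonicity: let U, Ω : ℝ → ℝ with U convex C² and Ω' = U'φ' for φ strictly increasing C¹. Suppose u^{m+1}_i is given by the three-point monotone scheme φ(u^{m+1}_i) = φ(u^m_i) − λ(q(u^m_i, u^m_{i+1}) − q(u^m_{i-1}, u^m_i)) where q is consistent (q(u,u) = f(u)) and monotone, and λ satisfies the CFL bound making H(a,b,c) := φ(b) − λ(q(b,c) − q(a,b)) nondecreasing in each of a, b, c (as a function into φ-values). Then for the Kruzkov entropies, for all c ∈ ℝ, |φ(u^{m+1}_i) − φ(c)| ≤ H(u^m_{i-1}∨c, u^m_i∨c, u^m_{i+1}∨c) − H(u^m_{i-1}∧c, u^m_i∧c,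 u^m_{i+1}∧c). -/
/-- Crandall–Majda-type inequality for a three-point monotone scheme:
|H(a,b,c) − H(γ,γ,γ)| ≤ H(a∨γ, b∨γ, c∨γ) − H(a∧γ, b∧γ, c∧γ), yielding the
discrete Kruzkov entropy inequality for the update φ(u^{m+1}) = H(a,b,c). -/
theorem stmt16 (φ f : ℝ → ℝ) (q : ℝ → ℝ → ℝ) (lam : ℝ) (hlam : 0 < lam)
    (hφ : StrictMono φ) (hφd : ContDiff ℝ 1 φ)
    (hq1 : ∀ v, Monotone fun u => q u v)
    (hq2 : ∀ u, Antitone fun v => q u v)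
    (hcons : ∀ u, q u u = f u)
    (H : ℝ → ℝ → ℝ → ℝ)
    (hH : ∀ a b c, H a b c = φ b - lam * (q b c - q a b))
    (hH1 : ∀ b c, Monotone fun a => H a b c)
    (hH2 : ∀ a c, Monotone fun b => H a b c)
    (hH3 : ∀ a b, Monotone fun c => H a b c)
    (a b c u1 : ℝ) (hupd : φ u1 = H a b c) :
    ∀ γ : ℝ, |φ u1 - φ γ| ≤
      H (max a γ) (max b γ) (max c γ) - H (min a γ) (min b γ) (min c γ) := by
  intro γ
  have hγ : φ γ = H γ γ γ := by simp [hH]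
  have key : ∀ x y z : ℝ,
      H (min x γ) (min y γ) (min z γ) ≤ H x y z ∧
      H x y z ≤ H (max x γ) (max y γ) (max z γ) := by
    intro x y z
    constructor
    · calc H (min x γ) (min y γ) (min z γ)
          ≤ H x (min y γ) (min z γ) := hH1 _ _ (min_le_left _ _)
        _ ≤ H x y (min z γ) := hH2 _ _ (min_le_left _ _)
        _ ≤ H x y z := hH3 _ _ (min_le_left _ _)
    · calc H x y z ≤ H (max x γ) y z := hH1 _ _ (le_max_left _ _)
        _ ≤ H (max x γ) (max y γ) z := hH2 _ _ (le_max_left _ _)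
        _ ≤ H (max x γ) (max y γ) (max z γ) := hH3 _ _ (le_max_left _ _)
  obtain ⟨h1, h2⟩ := key a b c
  have h3 : H (min a γ) (min b γ) (min c γ) ≤ H γ γ γ :=
    le_trans (hH1 _ _ (min_le_right a γ)) (le_trans (hH2 _ _ (min_le_right b γ))
      (hH3 _ _ (min_le_right c γ)))
  have h4 : H γ γ γ ≤ H (max a γ) (max b γ) (max c γ) :=
    le_trans (hH1 _ _ (le_max_right a γ)) (le_trans (hH2 _ _ (le_max_right b γ))
      (hH3 _ _ (le_max_right c γ)))
  rw [hupd, hγ, abs_sub_le_iff]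
  constructor <;> linarith
end
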